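/- Let A be an m×n dual complex matrix and let X be an NDMPI of A, and set A_e = A·X·A (the essential part of A). Then A*·A = (A_e)*·A = A*·A_e, and A·A* = A_e·A* = A·(A_e)*. -/

import Mathlib

open Matrix

/-- The dual complex numbers ℂ[ε] with ε² = 0 (dual numbers over ℂ). -/
abbrev DualComplex := DualNumber ℂ

/-- Conjugation on dual complex numbers: star (a + b·ε) = (conj a) + (conj b)·ε. -/
noncomputable instance : StarRing DualComplex where
  star x := ⟨star x.fst, star x.snd⟩
  star_involutive x := TrivSqZeroExt.ext (star_star x.fst) (star_star x.snd)
  star_mul x y := TrivSqZeroExt.ext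
    (by simp [TrivSqZeroExt.fst_mul, mul_comm]; erw [TrivSqZeroExt.fst_mul]; exact mul_comm _ _)
    (by simp [TrivSqZeroExt.snd_mul]; erw [TrivSqZeroExt.snd_mul]; simp; ring)
  star_add x y := TrivSqZeroExt.ext (by simp; rfl) (by simp; rfl)

/-- `X` is a new dual Moore–Penrose inverse (NDMPI) of `M`:
`M*·M·X·M·M* = M*·M·M*`, `X·M·X = X`, `(M·X)* = M·X`, `(X·M)* = X·M`. -/
def IsNDMPI {m n : ℕ} (M : Matrix (Fin m) (Fin n) DualComplex)
    (X : Matrix (Fin n) (Fin m) DualComplex) : Prop :=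
  Mᴴ * M * X * M * Mᴴ = Mᴴ * M * Mᴴ ∧
  X * M * X = X ∧
  (M * X)ᴴ = M * X ∧
  (X * M)ᴴ = X * M

/-! With `E = A X A - A`, the NDMPI axioms make `Aᴴ E` and `E Aᴴ` Hermitian with
`Aᴴ E Aᴴ = 0`, and the claim amounts to `Aᴴ E = 0 = E Aᴴ`. Over `ℂ` a Hermitian `P = B C` with
`P B = 0` vanishes, because `P Pᴴ = P B C = 0`. Over the dual numbers this fails (`(εI)(εI)ᴴ = 0`),
so the argument is run twice, writing `M = M₀ + M₁ ε`: on standard parts it gives `A₀ᴴ E₀ = 0`,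
hence `E₀ = A₀ (X₀ A₀ - 1) = 0`; once `E₀ = 0`, the infinitesimal part of `Aᴴ E` is `A₀ᴴ E₁`
(and that of `E Aᴴ` is `E₁ A₀ᴴ`), and the same argument kills it. -/

open scoped ComplexOrder

namespace Matrix

section StarOrdered

variable {I J R : Type*} [Fintype I] [Fintype J]
  [PartialOrder R] [Ring R] [StarRing R] [StarOrderedRing R] [NoZeroDivisors R]

theorem mul_eq_zero_of_isHermitian_of_mul_mul_eq_zero {B : Matrix I J R} {C : Matrix J I R}
    (hBC : (B * C).IsHermitian) (hBCB : B * C * B = 0) : B * C = 0 := by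
  rw [← self_mul_conjTranspose_eq_zero, hBC.eq, ← Matrix.mul_assoc, hBCB, Matrix.zero_mul]

end StarOrdered

variable {I J K : Type*}

/-- Writing a dual matrix as `M = M₀ + M₁ ε`, `M.stdPart = M₀` and `M.infPart = M₁`. -/
def stdPart (M : Matrix I J DualComplex) : Matrix I J ℂ := M.map TrivSqZeroExt.fst

def infPart (M : Matrix I J DualComplex) : Matrix I J ℂ := M.map TrivSqZeroExt.snd

@[simp]
theorem stdPart_zero : (0 : Matrix I J DualComplex).stdPart = 0 := rfl

@[simp]
theorem infPart_zero : (0 : Matrix I J DualComplex).infPart = 0 := rfl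

theorem eq_zero_of_stdPart_of_infPart {M : Matrix I J DualComplex} (h₀ : M.stdPart = 0)
    (h₁ : M.infPart = 0) : M = 0 :=
  Matrix.ext fun i j => TrivSqZeroExt.ext (congrFun₂ h₀ i j) (congrFun₂ h₁ i j)

@[simp]
theorem stdPart_sub (M N : Matrix I J DualComplex) :
    (M - N).stdPart = M.stdPart - N.stdPart := rfl

@[simp]
theorem stdPart_conjTranspose (M : Matrix I J DualComplex) : Mᴴ.stdPart = M.stdPartᴴ := rfl

theorem IsHermitian.stdPart {M : Matrix I I DualComplex} (hM : M.IsHermitian) :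
    M.stdPart.IsHermitian :=
  congrArg Matrix.stdPart hM

theorem IsHermitian.infPart {M : Matrix I I DualComplex} (hM : M.IsHermitian) :
    M.infPart.IsHermitian :=
  congrArg Matrix.infPart hM

variable [Fintype J]

@[simp]
theorem stdPart_mul (M : Matrix I J DualComplex) (N : Matrix J K DualComplex) :
    (M * N).stdPart = M.stdPart * N.stdPart := by
  ext i j
  simp [stdPart, mul_apply, TrivSqZeroExt.fst_sum]

@[simp]
theorem infPart_mul (M : Matrix I J DualComplex) (N : Matrix J K DualComplex) :
    (M * N).infPart = M.stdPart * N.infPart + M.infPart * N.stdPart := by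
  ext i j
  simp [stdPart, infPart, mul_apply, TrivSqZeroExt.snd_sum, Finset.sum_add_distrib, mul_comm]

variable [Fintype I]

theorem mul_eq_zero_of_isHermitian_of_stdPart_eq_zero {B : Matrix I J DualComplex}
    {C : Matrix J I DualComplex} (hC : C.stdPart = 0) (hBC : (B * C).IsHermitian)
    (hBCB : B * C * B = 0) : B * C = 0 := by
  have h₀ : (B * C).stdPart = 0 := by simp [hC]
  have h₁ : (B * C).infPart = B.stdPart * C.infPart := by simp [hC]
  refine eq_zero_of_stdPart_of_infPart h₀ ?_
  rw [h₁]
  refine mul_eq_zero_of_isHermitian_of_mul_mul_eq_zero (h₁ ▸ hBC.infPart) ?_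
  simpa [h₀, h₁] using congrArg Matrix.infPart hBCB

theorem mul_eq_zero_of_isHermitian_of_stdPart_eq_zero' {B : Matrix I J DualComplex}
    {C : Matrix J I DualComplex} (hC : C.stdPart = 0) (hCB : (C * B).IsHermitian)
    (hBCB : B * C * B = 0) : C * B = 0 := by
  rw [← conjTranspose_eq_zero, conjTranspose_mul]
  refine mul_eq_zero_of_isHermitian_of_stdPart_eq_zero (by simp [hC]) ?_ ?_
  · rw [← conjTranspose_mul]; exact hCB.conjTranspose
  · rw [← conjTranspose_mul, ← conjTranspose_mul, ← Matrix.mul_assoc, hBCB, conjTranspose_zero]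

end Matrix

namespace IsNDMPI

variable {m n : ℕ} {A : Matrix (Fin m) (Fin n) DualComplex} {X : Matrix (Fin n) (Fin m) DualComplex}

theorem conjTranspose_mul_sub_mul_conjTranspose (hX : IsNDMPI A X) :
    Aᴴ * (A * X * A - A) * Aᴴ = 0 := by
  simp only [Matrix.mul_sub, Matrix.sub_mul, ← Matrix.mul_assoc, hX.1, sub_self]

theorem isHermitian_conjTranspose_mul_sub (hX : IsNDMPI A X) :
    (Aᴴ * (A * X * A - A)).IsHermitian := by
  rw [Matrix.mul_sub, ← Matrix.mul_assoc]
  exact (isHermitian_conjTranspose_mul_mul A hX.2.2.1).sub (isHermitian_conjTranspose_mul_self A)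

theorem isHermitian_sub_mul_conjTranspose (hX : IsNDMPI A X) :
    ((A * X * A - A) * Aᴴ).IsHermitian := by
  rw [Matrix.sub_mul, Matrix.mul_assoc A X A]
  exact (isHermitian_mul_mul_conjTranspose A hX.2.2.2).sub (isHermitian_mul_conjTranspose_self A)

theorem stdPart_sub_eq_zero (hX : IsNDMPI A X) : (A * X * A - A).stdPart = 0 := by
  have hfactor : (A * X * A - A).stdPart = A.stdPart * (X.stdPart * A.stdPart - 1) := by
    simp only [stdPart_sub, stdPart_mul, Matrix.mul_sub, Matrix.mul_one, Matrix.mul_assoc]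
  have h : A.stdPartᴴ * (A * X * A - A).stdPart = 0 :=
    mul_eq_zero_of_isHermitian_of_mul_mul_eq_zero
      (by simpa using hX.isHermitian_conjTranspose_mul_sub.stdPart)
      (by simpa using congrArg Matrix.stdPart hX.conjTranspose_mul_sub_mul_conjTranspose)
  rw [hfactor, ← Matrix.mul_assoc, conjTranspose_mul_self_mul_eq_zero] at h
  rw [hfactor, h]

theorem conjTranspose_mul_essential (hX : IsNDMPI A X) : Aᴴ * (A * X * A) = Aᴴ * A :=
  sub_eq_zero.mp <| (Matrix.mul_sub _ _ _).symm.trans <|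
    mul_eq_zero_of_isHermitian_of_stdPart_eq_zero hX.stdPart_sub_eq_zero
      hX.isHermitian_conjTranspose_mul_sub hX.conjTranspose_mul_sub_mul_conjTranspose

theorem essential_mul_conjTranspose (hX : IsNDMPI A X) : A * X * A * Aᴴ = A * Aᴴ :=
  sub_eq_zero.mp <| (Matrix.sub_mul _ _ _).symm.trans <|
    mul_eq_zero_of_isHermitian_of_stdPart_eq_zero' hX.stdPart_sub_eq_zero
      hX.isHermitian_sub_mul_conjTranspose hX.conjTranspose_mul_sub_mul_conjTranspose

end IsNDMPI

/-- If `X` is an NDMPI of `A` and `A_e = A·X·A`, then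
`A*·A = (A_e)*·A = A*·A_e` and `A·A* = A_e·A* = A·(A_e)*`. -/
theorem stmt_0 {m n : ℕ} (A : Matrix (Fin m) (Fin n) DualComplex)
    (X : Matrix (Fin n) (Fin m) DualComplex) (hX : IsNDMPI A X) :
    (Aᴴ * A = (A * X * A)ᴴ * A ∧ Aᴴ * A = Aᴴ * (A * X * A)) ∧
    (A * Aᴴ = (A * X * A) * Aᴴ ∧ A * Aᴴ = A * (A * X * A)ᴴ) := by
  have hleft := hX.conjTranspose_mul_essential
  have hright := hX.essential_mul_conjTranspose
  refine ⟨⟨?_, hleft.symm⟩, ⟨hright.symm, ?_⟩⟩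
  · rw [conjTranspose_mul, hX.2.2.1, Matrix.mul_assoc, hleft]
  · rw [Matrix.mul_assoc, conjTranspose_mul, hX.2.2.2, ← Matrix.mul_assoc, ← Matrix.mul_assoc,
      hright]
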